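/- arXiv:2603.08367 — 2 statements merged into one kernel-verified Lean document; each statement's English description precedes it below -/
import Mathlib

section
/- Let E be a real inner product space, L > 0, and let f : E → ℝ be differentiable with L-Lipschitz gradient, i.e. ‖∇f(a) − ∇f(b)‖ ≤ L ‖a − b‖ for all a, b ∈ E. Then for all x, y, u ∈ E, f(y) ≤ f(x) + ⟨u, y − x⟩ + (3L/4) ‖y − x‖² + (1/L) ‖∇f(x) − u‖². -/
open RealInnerProductSpace

/-! Along the segment `t ↦ x + t • v`, `v = y - x`, the derivative of
`t ↦ f (x + t • v) - t * f' x v` is at most `L t ‖v‖²`, so this function stays below the parabola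
`t ↦ f x + (L / 2) t² ‖v‖²`; at `t = 1` this is the descent lemma
`f y ≤ f x + ⟪∇f x, y - x⟫ + (L / 2) ‖y - x‖²`. Replacing `∇f x` by `u` costs
`⟪∇f x - u, y - x⟫`, which Young's inequality bounds by `(1 / L) ‖∇f x - u‖² + (L / 4) ‖y - x‖²`. -/

theorem image_le_add_fderiv_add_half_mul_sq {F : Type*} [NormedAddCommGroup F] [NormedSpace ℝ F]
    {f : F → ℝ} {L : ℝ} {x : F} (hf : Differentiable ℝ f)
    (hlip : ∀ z, ‖fderiv ℝ f z - fderiv ℝ f x‖ ≤ L * ‖z - x‖) (y : F) :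
    f y ≤ f x + fderiv ℝ f x (y - x) + L / 2 * ‖y - x‖ ^ 2 := by
  set v := y - x
  let φ : ℝ → ℝ := fun t => f (x + t • v) - t * fderiv ℝ f x v
  let B : ℝ → ℝ := fun t => f x + L / 2 * ‖v‖ ^ 2 * t ^ 2
  have hφ : ∀ t, HasDerivAt φ (fderiv ℝ f (x + t • v) v - fderiv ℝ f x v) t := by
    intro t
    have hline : HasDerivAt (fun t : ℝ => x + t • v) v t := by
      simpa using ((hasDerivAt_id t).smul_const v).const_add x
    exact ((hf _).hasFDerivAt.comp_hasDerivAt t hline).sub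
      (hasDerivAt_mul_const (fderiv ℝ f x v))
  have hB : ∀ t, HasDerivAt B (L * ‖v‖ ^ 2 * t) t := by
    intro t
    refine (((hasDerivAt_pow 2 t).const_mul (L / 2 * ‖v‖ ^ 2)).const_add (f x)).congr_deriv ?_
    norm_num
    ring
  have hslope : ∀ t ∈ Set.Ico (0 : ℝ) 1,
      fderiv ℝ f (x + t • v) v - fderiv ℝ f x v ≤ L * ‖v‖ ^ 2 * t := by
    rintro t ⟨ht, -⟩
    calc fderiv ℝ f (x + t • v) v - fderiv ℝ f x v
        = (fderiv ℝ f (x + t • v) - fderiv ℝ f x) v := rfl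
      _ ≤ ‖fderiv ℝ f (x + t • v) - fderiv ℝ f x‖ * ‖v‖ :=
          (Real.le_norm_self _).trans (ContinuousLinearMap.le_opNorm _ _)
      _ ≤ L * ‖t • v‖ * ‖v‖ := by
          gcongr
          simpa using hlip (x + t • v)
      _ = L * ‖v‖ ^ 2 * t := by
          rw [norm_smul, Real.norm_of_nonneg ht]; ring
  have hfence := image_le_of_deriv_right_le_deriv_boundary
    (fun t _ => (hφ t).continuousAt.continuousWithinAt) (fun t _ => (hφ t).hasDerivWithinAt)
    (by simp [φ, B]) (fun t _ => (hB t).continuousAt.continuousWithinAt)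
    (fun t _ => (hB t).hasDerivWithinAt) hslope (Set.right_mem_Icc.2 zero_le_one)
  simp only [φ, B, one_smul, one_mul, one_pow, mul_one, v, add_sub_cancel] at hfence
  linarith

theorem norm_fderiv_sub_fderiv_eq_norm_gradient_sub_gradient
    {E : Type*} [NormedAddCommGroup E] [InnerProductSpace ℝ E] [CompleteSpace E]
    (f : E → ℝ) (a b : E) :
    ‖fderiv ℝ f a - fderiv ℝ f b‖ = ‖gradient f a - gradient f b‖ := by
  rw [← toDual_gradient, ← toDual_gradient, ← map_sub, LinearIsometryEquiv.norm_map]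

theorem image_le_add_inner_gradient_add_half_mul_sq
    {E : Type*} [NormedAddCommGroup E] [InnerProductSpace ℝ E] [CompleteSpace E]
    {f : E → ℝ} {L : ℝ} {x : E} (hf : Differentiable ℝ f)
    (hlip : ∀ z, ‖gradient f z - gradient f x‖ ≤ L * ‖z - x‖) (y : E) :
    f y ≤ f x + ⟪gradient f x, y - x⟫ + L / 2 * ‖y - x‖ ^ 2 := by
  rw [inner_gradient_left]
  refine image_le_add_fderiv_add_half_mul_sq hf (fun z => ?_) y
  rw [norm_fderiv_sub_fderiv_eq_norm_gradient_sub_gradient]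
  exact hlip z

theorem real_inner_le_one_div_mul_norm_sq_add_mul_norm_sq
    {E : Type*} [NormedAddCommGroup E] [InnerProductSpace ℝ E]
    {c : ℝ} (hc : 0 < c) (w v : E) :
    ⟪w, v⟫ ≤ 1 / c * ‖w‖ ^ 2 + c / 4 * ‖v‖ ^ 2 := by
  have hyoung : ‖w‖ * ‖v‖ ≤ 1 / c * ‖w‖ ^ 2 + c / 4 * ‖v‖ ^ 2 := by
    rw [one_div_mul_eq_div, div_add' _ _ _ hc.ne', le_div_iff₀ hc]
    nlinarith [sq_nonneg (2 * ‖w‖ - c * ‖v‖)]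
  exact (real_inner_le_norm w v).trans hyoung

/-- Refined descent inequality with a surrogate gradient direction `u`
(first step of the proof of Lemma 5 of the paper). -/
theorem descent_with_surrogate_direction
    {E : Type*} [NormedAddCommGroup E] [InnerProductSpace ℝ E] [CompleteSpace E]
    (L : ℝ) (hL : 0 < L) (f : E → ℝ) (hf : Differentiable ℝ f)
    (hlip : ∀ a b : E, ‖gradient f a - gradient f b‖ ≤ L * ‖a - b‖) :
    ∀ x y u : E,
      f y ≤ f x + ⟪u, y - x⟫ + (3 * L / 4) * ‖y - x‖ ^ 2 +
        (1 / L) * ‖gradient f x - u‖ ^ 2 := by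
  intro x y u
  have hdescent := image_le_add_inner_gradient_add_half_mul_sq hf (fun z => hlip z x) y
  have hsplit : ⟪gradient f x, y - x⟫ = ⟪u, y - x⟫ + ⟪gradient f x - u, y - x⟫ := by
    rw [inner_sub_left]; ring
  have herror := real_inner_le_one_div_mul_norm_sq_add_mul_norm_sq hL (gradient f x - u) (y - x)
  linarith
end

section
/- Let η ∈ (0,1) and let v, w : ℕ → ℝ be nonnegative sequences satisfying v(k+1) ≤ η v(k) + w(k) for all k ≥ 0. Then for every K ≥ 0, √(∑_{k=0}^K v(k)²) ≤ (√2/(1−η)) √(∑_{k=0}^K w(k)²) + √(2/(1−η²)) · v(0). -/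
/-!
Squaring the recursion and applying Jensen's inequality to the convex combination
`η v + (1 - η) (w / (1 - η))` gives `v(k+1)² ≤ η v(k)² + w(k)² / (1 - η)`. Summing over
`k < K` bounds the energy `S = ∑_{k ≤ K} v(k)²` by `v(0)² + η S + W / (1 - η)`, where
`W = ∑_{k ≤ K} w(k)²`, so `S ≤ v(0)² / (1 - η) + W / (1 - η)²`; the claim follows from
`√(a² + b²) ≤ a + b` and the comparison of constants `1 / (1 - η) ≤ 2 / (1 - η²)`.
-/

open Finset

lemma sq_mul_add_le {η : ℝ} (hη0 : 0 ≤ η) (hη1 : η < 1) (a b : ℝ) :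
    (η * a + b) ^ 2 ≤ η * a ^ 2 + b ^ 2 / (1 - η) := by
  have h1η : 0 < 1 - η := sub_pos.mpr hη1
  rw [← sub_nonneg]
  have hdiff : η * a ^ 2 + b ^ 2 / (1 - η) - (η * a + b) ^ 2
      = η * ((1 - η) * a - b) ^ 2 / (1 - η) := by
    field_simp
    ring
  rw [hdiff]
  positivity

lemma sum_range_sq_le_of_le_mul_add {η : ℝ} (hη0 : 0 ≤ η) (hη1 : η < 1) {v w : ℕ → ℝ}
    (hv : ∀ k, 0 ≤ v k) (hrec : ∀ k, v (k + 1) ≤ η * v k + w k) (K : ℕ) :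
    ∑ k ∈ range (K + 1), v k ^ 2 ≤
      v 0 ^ 2 / (1 - η) + (∑ k ∈ range (K + 1), w k ^ 2) / (1 - η) ^ 2 := by
  have h1η : 0 < 1 - η := sub_pos.mpr hη1
  set S := ∑ k ∈ range (K + 1), v k ^ 2
  set W := ∑ k ∈ range (K + 1), w k ^ 2
  have hstep (k : ℕ) : v (k + 1) ^ 2 ≤ η * v k ^ 2 + w k ^ 2 / (1 - η) :=
    (pow_le_pow_left₀ (hv _) (hrec k) 2).trans (sq_mul_add_le hη0 hη1 _ _)
  have hprefix (f : ℕ → ℝ) : ∑ k ∈ range K, f k ^ 2 ≤ ∑ k ∈ range (K + 1), f k ^ 2 :=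
    sum_le_sum_of_subset_of_nonneg (range_subset_range.mpr K.le_succ)
      fun _ _ _ => sq_nonneg _
  have hS : S ≤ η * S + W / (1 - η) + v 0 ^ 2 :=
    calc S = ∑ k ∈ range K, v (k + 1) ^ 2 + v 0 ^ 2 := sum_range_succ' _ _
      _ ≤ ∑ k ∈ range K, (η * v k ^ 2 + w k ^ 2 / (1 - η)) + v 0 ^ 2 := by
        gcongr with k; exact hstep k
      _ = η * ∑ k ∈ range K, v k ^ 2 + (∑ k ∈ range K, w k ^ 2) / (1 - η) + v 0 ^ 2 := by
        rw [sum_add_distrib, mul_sum, sum_div]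
      _ ≤ η * S + W / (1 - η) + v 0 ^ 2 := by
        gcongr
        · exact hprefix v
        · exact hprefix w
  have hS' : (1 - η) * S ≤ v 0 ^ 2 + W / (1 - η) := by linarith
  calc S ≤ (v 0 ^ 2 + W / (1 - η)) / (1 - η) := by rwa [le_div_iff₀ h1η, mul_comm]
    _ = v 0 ^ 2 / (1 - η) + W / (1 - η) ^ 2 := by field_simp

lemma Real.sqrt_le_add_of_le_sq_add_sq {x a b : ℝ} (ha : 0 ≤ a) (hb : 0 ≤ b)
    (h : x ≤ a ^ 2 + b ^ 2) : √x ≤ a + b :=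
  (Real.sqrt_le_left (add_nonneg ha hb)).mpr (by nlinarith [mul_nonneg ha hb])

theorem energy_comparison_general
    (η : ℝ) (hη0 : 0 < η) (hη1 : η < 1)
    (v w : ℕ → ℝ) (hv : ∀ k, 0 ≤ v k)
    (hrec : ∀ k, v (k + 1) ≤ η * v k + w k) :
    ∀ K : ℕ,
      Real.sqrt (∑ k ∈ range (K + 1), (v k) ^ 2) ≤
        (Real.sqrt 2 / (1 - η)) * Real.sqrt (∑ k ∈ range (K + 1), (w k) ^ 2) +
          Real.sqrt (2 / (1 - η ^ 2)) * v 0 := by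
  intro K
  have h1η : 0 < 1 - η := sub_pos.mpr hη1
  have h1η2 : 0 < 1 - η ^ 2 := by nlinarith
  set W := ∑ k ∈ range (K + 1), w k ^ 2
  have hW : 0 ≤ W := sum_nonneg fun _ _ => sq_nonneg _
  refine Real.sqrt_le_add_of_le_sq_add_sq (by positivity) (mul_nonneg (Real.sqrt_nonneg _) (hv 0)) ?_
  have hconst : 1 / (1 - η) ≤ 2 / (1 - η ^ 2) := by
    rw [div_le_div_iff₀ h1η h1η2]; nlinarith
  calc ∑ k ∈ range (K + 1), v k ^ 2 ≤ v 0 ^ 2 / (1 - η) + W / (1 - η) ^ 2 :=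
        sum_range_sq_le_of_le_mul_add hη0.le hη1 hv hrec K
    _ ≤ 2 / (1 - η ^ 2) * v 0 ^ 2 + 2 * W / (1 - η) ^ 2 := by
        gcongr
        · rw [div_eq_mul_one_div, mul_comm]; gcongr
        · linarith
    _ = (√2 / (1 - η) * √W) ^ 2 + (√(2 / (1 - η ^ 2)) * v 0) ^ 2 := by
        rw [mul_pow, mul_pow, div_pow, Real.sq_sqrt zero_le_two, Real.sq_sqrt hW,
          Real.sq_sqrt (div_pos two_pos h1η2).le]
        ring

/-- Energy-comparison lemma for geometrically contracting recursions
(Appendix D of the paper, citing Lemma 2 of Xie et al.): if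
`v(k+1) ≤ η v(k) + w(k)` with `η ∈ (0,1)`, then
`√(∑_{k=0}^K v(k)²) ≤ (√2/(1−η)) √(∑_{k=0}^K w(k)²) + √(2/(1−η²)) v(0)`. -/
theorem energy_comparison
    (η : ℝ) (hη0 : 0 < η) (hη1 : η < 1)
    (v w : ℕ → ℝ) (hv : ∀ k, 0 ≤ v k) (hw : ∀ k, 0 ≤ w k)
    (hrec : ∀ k, v (k + 1) ≤ η * v k + w k) :
    ∀ K : ℕ,
      Real.sqrt (∑ k ∈ range (K + 1), (v k) ^ 2) ≤
        (Real.sqrt 2 / (1 - η)) * Real.sqrt (∑ k ∈ range (K + 1), (w k) ^ 2) +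
          Real.sqrt (2 / (1 - η ^ 2)) * v 0 :=
  energy_comparison_general η hη0 hη1 v w hv hrec
end
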